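/- arXiv:2312.12900 — 2 statements merged into one kernel-verified Lean document; each statement's English description precedes it below -/
import Mathlib

section
/- Let m ∈ ℕ₀ and set λ = 4m(m+1). The complex vector space V = span{P_n^{-m} : n ∈ ℤ, |n| ≤ m} of holomorphic functions on {(z,w) ∈ ℂ² : zw ≠ 1} has dimension 2m+1; i.e., the functions P_{-m}^{-m}, …, P_m^{-m} are linearly independent. -/
open Complex

/-- The complement of the complexified unit circle (affine part). -/
def OmegaStar : Type := {p : ℂ × ℂ // p.1 * p.2 ≠ 1}

/-- Exceptional Poisson Fourier mode `P_n^{-m}` for `|n| ≤ m`, as a holomorphic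
function on `{zw ≠ 1}`. -/
noncomputable def PFM (m : ℕ) (n : ℤ) (p : OmegaStar) : ℂ :=
  (-1 : ℂ) ^ n * (∑ k ∈ Finset.range (m - n.natAbs + 1),
      (Nat.choose m (k + n.natAbs) : ℂ) * (Nat.choose m k : ℂ) *
        p.1.1 ^ (k + (max (-n) 0).toNat) * p.1.2 ^ (k + (max n 0).toNat))
    / (1 - p.1.1 * p.1.2) ^ m

/-! The linear independence comes from the torus action `(z, w) ↦ (η⁻¹ z, η w)`, which
preserves `zw`: `P_n^{-m}` is an eigenvector of the induced operator with eigenvalue `η ^ n`,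
and for `η = 2` these eigenvalues are pairwise distinct. Each `P_n^{-m}` is nonzero, as its
value at `(1, 0)` (for `n ≤ 0`) or at `(0, 1)` (for `n ≥ 0`) is `±binom(m, |n|)`. -/

namespace OmegaStar

def mk (z w : ℂ) (h : z * w ≠ 1) : OmegaStar := ⟨(z, w), h⟩

noncomputable def rescale (η : ℂ) (hη : η ≠ 0) (p : OmegaStar) : OmegaStar :=
  mk (η⁻¹ * p.1.1) (η * p.1.2) <| by
    rw [mul_mul_mul_comm, inv_mul_cancel₀ hη, one_mul]; exact p.2

def swap (p : OmegaStar) : OmegaStar :=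
  mk p.1.2 p.1.1 <| by rw [mul_comm]; exact p.2

end OmegaStar

lemma PFM_rescale (m : ℕ) (n : ℤ) {η : ℂ} (hη : η ≠ 0) (p : OmegaStar) :
    PFM m n (p.rescale η hη) = η ^ n * PFM m n p := by
  have hpow : ∀ k : ℕ, η⁻¹ ^ (k + (max (-n) 0).toNat) * η ^ (k + (max n 0).toNat) = η ^ n := by
    intro k
    rw [inv_pow, ← zpow_natCast, ← zpow_natCast, ← zpow_neg, ← zpow_add₀ hη]
    congr 1
    omega
  simp only [PFM, OmegaStar.rescale, OmegaStar.mk, mul_mul_mul_comm η⁻¹, inv_mul_cancel₀ hη,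
    one_mul]
  rw [← mul_div_assoc, mul_left_comm]
  congr 2
  rw [Finset.mul_sum]
  refine Finset.sum_congr rfl fun k _ => ?_
  rw [← hpow k]
  ring

lemma PFM_neg_swap (m : ℕ) (n : ℤ) (p : OmegaStar) : PFM m (-n) p.swap = PFM m n p := by
  have hsign : (-1 : ℂ) ^ (-n) = (-1) ^ n := by rw [zpow_neg, ← inv_zpow, inv_neg, inv_one]
  simp only [PFM, OmegaStar.swap, OmegaStar.mk, Int.natAbs_neg, neg_neg, hsign,
    mul_comm p.1.2 p.1.1]
  congr 2
  exact Finset.sum_congr rfl fun k _ => by ring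

lemma PFM_one_zero (m : ℕ) {n : ℤ} (hn : n ≤ 0) :
    PFM m n (.mk 1 0 (by simp)) = (-1) ^ n * m.choose n.natAbs := by
  have hzero : (max n 0).toNat = 0 := by omega
  simp only [PFM, OmegaStar.mk, hzero, one_pow, mul_one, mul_zero, sub_zero, div_one, add_zero]
  rw [Finset.sum_eq_single 0 (fun k _ hk => by simp [hk]) (by simp)]
  simp

lemma PFM_ne_zero {m : ℕ} {n : ℤ} (hn : n.natAbs ≤ m) : PFM m n ≠ 0 := by
  have hchoose : (m.choose n.natAbs : ℂ) ≠ 0 := Nat.cast_ne_zero.2 (Nat.choose_pos hn).ne'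
  intro h
  rcases le_total n 0 with h0 | h0
  · have := congrFun h (.mk 1 0 (by simp))
    rw [PFM_one_zero m h0] at this
    exact mul_ne_zero (zpow_ne_zero n (by norm_num)) hchoose this
  · have := congrFun h (OmegaStar.swap (.mk 1 0 (by simp)))
    rw [← neg_neg n, PFM_neg_swap, PFM_one_zero m (neg_nonpos.2 h0), Int.natAbs_neg] at this
    exact mul_ne_zero (zpow_ne_zero (-n) (by norm_num)) hchoose this

lemma PFM_hasEigenvector_rescale {m : ℕ} {n : ℤ} (hn : n.natAbs ≤ m) {η : ℂ} (hη : η ≠ 0) :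
    Module.End.HasEigenvector (LinearMap.funLeft ℂ ℂ (OmegaStar.rescale η hη)) (η ^ n) (PFM m n) :=
  Module.End.hasEigenvector_iff.2
    ⟨Module.End.mem_eigenspace_iff.2 (funext fun p => PFM_rescale m n hη p), PFM_ne_zero hn⟩

lemma zpow_right_injective_of_norm_ne_one {𝕜 : Type*} [NormedDivisionRing 𝕜] {η : 𝕜}
    (hη₀ : η ≠ 0) (hη₁ : ‖η‖ ≠ 1) :
    Function.Injective fun n : ℤ => η ^ n := fun a b h =>
  zpow_right_injective₀ (norm_pos_iff.2 hη₀) hη₁ <| by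
    simpa only [norm_zpow] using congrArg norm h

/-- The functions `P_{-m}^{-m}, …, P_m^{-m}` are linearly independent, and the
space they span has dimension `2m+1`. -/
theorem stmt18 (m : ℕ) :
    LinearIndependent ℂ (fun n : (Finset.Icc (-(m : ℤ)) (m : ℤ)) => PFM m n.1)
    ∧ Module.finrank ℂ
        ↥(Submodule.span ℂ
          (Set.range (fun n : (Finset.Icc (-(m : ℤ)) (m : ℤ)) => PFM m n.1)))
      = 2 * m + 1 := by
  have htwo : (2 : ℂ) ≠ 0 := two_ne_zero
  have hli : LinearIndependent ℂ (fun n : (Finset.Icc (-(m : ℤ)) (m : ℤ)) => PFM m n.1) := by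
    refine Module.End.eigenvectors_linearIndependent'
      (LinearMap.funLeft ℂ ℂ (OmegaStar.rescale 2 htwo))
      (fun n : (Finset.Icc (-(m : ℤ)) (m : ℤ)) => (2 : ℂ) ^ n.1)
      ((zpow_right_injective_of_norm_ne_one htwo (by norm_num)).comp Subtype.val_injective) _ fun n => ?_
    exact PFM_hasEigenvector_rescale (by have := Finset.mem_Icc.1 n.2; omega) htwo
  refine ⟨hli, ?_⟩
  rw [finrank_span_eq_card hli, Fintype.card_coe, Int.card_Icc]
  omega
end

section
/- Let M ∈ ℕ₀ and V = span{ z^j w^k (1-zw)^{-M} : 0 ≤ j, k ≤ M } as a space of holomorphic functions on {(z,w) ∈ ℂ² : zw ≠ 1}. Then dim V = (M+1)², and V equals the span of the Poisson Fourier modes { P_n^{-m} : 0 ≤ m ≤ M, |n| ≤ m }, which is the direct sum over m = 0, …, M of the (2m+1)-dimensional eigenspaces of Δ_{zw} with eigenvalue 4m(m+1). -/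
open Complex

/-- The monomial family `z^j w^k (1-zw)^{-M}`, `0 ≤ j,k ≤ M`. -/
noncomputable def mono (M : ℕ) (jk : Fin (M + 1) × Fin (M + 1)) (p : OmegaStar) : ℂ :=
  p.1.1 ^ (jk.1 : ℕ) * p.1.2 ^ (jk.2 : ℕ) / (1 - p.1.1 * p.1.2) ^ M

/-!
Clearing the common denominator `(1 - zw)^M` identifies `V` with polynomials in `z, w` of
bidegree at most `(M, M)`; evaluation on `{zw ≠ 1}` is injective because `1 - zw` is not a
zero divisor. The numerator of `P_n^{-m}` is `z^{(-n)₊} w^{n₊} f(zw) (1 - zw)^{M-m}` with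
`f(1) ≠ 0`. Numerators with different `n` live on disjoint diagonals of monomials, and for fixed
`n` they vanish at `zw = 1` to the distinct orders `M - m`; so the `(M+1)²` modes are linearly
independent, and as they lie in `V`, which is spanned by `(M+1)²` functions, they form a basis.
-/

open Polynomial Polynomial.Bivariate

theorem Polynomial.linearIndependent_of_injective_rootMultiplicity {K ι : Type*} [Field K]
    [Fintype ι] {p : ι → K[X]} (a : K) (hp : ∀ i, p i ≠ 0)
    (hinj : Function.Injective fun i => (p i).rootMultiplicity a) :
    LinearIndependent K p := by
  classical
  -- the nonzero term of least vanishing order at `a` cannot be cancelled by the others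
  rw [Fintype.linearIndependent_iff]
  intro g hg
  by_contra! hne
  obtain ⟨i₀, hi₀, hmin⟩ := (Finset.univ.filter (g · ≠ 0)).exists_min_image
    (fun i => (p i).rootMultiplicity a) (by simpa [Finset.filter_nonempty_iff] using hne)
  set r := (p i₀).rootMultiplicity a
  have hrest : (X - C a) ^ (r + 1) ∣ ∑ i ∈ Finset.univ.erase i₀, g i • p i := by
    refine Finset.dvd_sum fun i hi => ?_
    by_cases hgi : g i = 0
    · simp [hgi]
    have hlt : r < (p i).rootMultiplicity a :=
      (hmin i (by simp [hgi])).lt_of_ne fun h => Finset.ne_of_mem_erase hi (hinj h.symm)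
    exact ((le_rootMultiplicity_iff (hp i)).mp hlt).trans (by simp [smul_eq_C_mul])
  have hgi₀ : g i₀ ≠ 0 := (Finset.mem_filter.mp hi₀).2
  have : (X - C a) ^ (r + 1) ∣ p i₀ := by
    rw [← Finset.add_sum_erase _ _ (Finset.mem_univ i₀), add_eq_zero_iff_eq_neg] at hg
    have h := (dvd_neg.mpr hrest)
    rw [← hg, smul_eq_C_mul] at h
    exact (IsUnit.dvd_mul_left (isUnit_C.mpr hgi₀.isUnit)).mp h
  exact absurd ((le_rootMultiplicity_iff (hp i₀)).mpr this) (by omega)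

theorem linearIndependent_of_fiberwise {R M N ι η : Type*} [Ring R] [AddCommGroup M]
    [Module R M] [AddCommGroup N] [Module R N] [Fintype ι] [DecidableEq η]
    {v : ι → M} (c : ι → η) (w : ι → N) (π : η → M →ₗ[R] N)
    (hπ : ∀ i n, π n (v i) = if c i = n then w i else 0)
    (hw : ∀ n, LinearIndependent R fun i : {i // c i = n} => w i) :
    LinearIndependent R v := by
  rw [Fintype.linearIndependent_iff]
  intro g hg i
  have h := congrArg (π (c i)) hg
  simp only [map_sum, map_smul, hπ, smul_ite, smul_zero, map_zero] at h
  rw [← Finset.sum_filter, Finset.sum_subtype _ (p := fun j => c j = c i) (fun j => by simp)] at h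
  exact Fintype.linearIndependent_iff.mp (hw (c i)) (fun j => g j) h ⟨i, rfl⟩

theorem LinearIndependent.iSupIndep_span_image_preimage {R M ι η : Type*} [Ring R]
    [AddCommGroup M] [Module R M] {v : ι → M} (hv : LinearIndependent R v) (f : ι → η) :
    iSupIndep fun n => Submodule.span R (v '' (f ⁻¹' {n})) := by
  intro n
  refine (hv.disjoint_span_image disjoint_compl_right).mono_right (iSup₂_le fun j hj => ?_)
  exact Submodule.span_mono (Set.image_mono fun i hi => by simp_all)

theorem Polynomial.eq_zero_of_forall_evalEval_eq_zero {R : Type*} [CommRing R] [IsDomain R]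
    [Infinite R] {p : R[X][Y]} (h : ∀ x y, p.evalEval x y = 0) : p = 0 := by
  have hmap : ∀ x, p.map (evalRingHom x) = 0 := fun x =>
    Polynomial.funext fun y => by simp [map_evalRingHom_eval, h]
  ext k : 1
  refine Polynomial.funext fun x => ?_
  simpa using congrArg (coeff · k) (hmap x)

section diagMul

variable {R : Type*} [CommSemiring R]

noncomputable def Polynomial.monomialXY (M : ℕ) (jk : Fin (M + 1) × Fin (M + 1)) : R[X][Y] :=
  monomial jk.2 (monomial jk.1 1)

noncomputable def Polynomial.diagMul (a b : ℕ) (g : R[X]) : R[X][Y] :=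
  g.sum fun i c => monomial (i + b) (monomial (i + a) c)

theorem Polynomial.evalEval_diagMul (a b : ℕ) (g : R[X]) (x y : R) :
    (diagMul a b g).evalEval x y = x ^ a * y ^ b * g.eval (x * y) := by
  rw [diagMul, Polynomial.sum, evalEval_finsetSum, eval_eq_sum, Polynomial.sum, Finset.mul_sum]
  refine Finset.sum_congr rfl fun i _ => ?_
  simp only [evalEval, eval_monomial, eval_mul, eval_C, eval_pow]
  ring

theorem Polynomial.coeff_coeff_diagMul_add (a b i : ℕ) (g : R[X]) :
    ((diagMul a b g).coeff (i + b)).coeff (i + a) = g.coeff i := by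
  simp only [diagMul, Polynomial.sum, finsetSum_coeff, coeff_monomial]
  rw [Finset.sum_eq_single i (fun k _ hk => by simp [hk]) (fun hi => by simp_all)]
  simp

theorem Polynomial.coeff_coeff_diagMul_of_ne {a b j k : ℕ} (g : R[X])
    (h : (j : ℤ) - k ≠ (b : ℤ) - a) : ((diagMul a b g).coeff j).coeff k = 0 := by
  simp only [diagMul, Polynomial.sum, finsetSum_coeff, coeff_monomial]
  refine Finset.sum_eq_zero fun i _ => ?_
  split_ifs with hj
  · rw [coeff_monomial, if_neg (by omega)]
  · rfl

theorem Polynomial.diagMul_mem_span {M a b : ℕ} (g : R[X]) (ha : g.natDegree + a ≤ M)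
    (hb : g.natDegree + b ≤ M) :
    diagMul a b g ∈ Submodule.span R (Set.range (monomialXY M)) := by
  refine Submodule.sum_mem _ fun i hi => ?_
  have hi := le_natDegree_of_mem_supp i hi
  have hmem := Submodule.smul_mem (Submodule.span R (Set.range (monomialXY (R := R) M))) (g.coeff i)
    (Submodule.subset_span ⟨(⟨i + a, by omega⟩, ⟨i + b, by omega⟩), rfl⟩)
  simpa [monomialXY, smul_monomial] using hmem

end diagMul

namespace PoissonFourierMode

noncomputable def evalOmega (M : ℕ) : ℂ[X][Y] →ₗ[ℂ] (OmegaStar → ℂ) :=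
  LinearMap.pi fun p => ((1 - p.1.1 * p.1.2) ^ M)⁻¹ • (aevalAeval p.1.1 p.1.2).toLinearMap

theorem evalOmega_apply (M : ℕ) (f : ℂ[X][Y]) (p : OmegaStar) :
    evalOmega M f p = f.evalEval p.1.1 p.1.2 / (1 - p.1.1 * p.1.2) ^ M := by
  simp only [evalOmega, LinearMap.pi_apply, LinearMap.smul_apply, AlgHom.toLinearMap_apply,
    coe_aevalAeval_eq_evalEval, smul_eq_mul, div_eq_inv_mul]

theorem evalOmega_injective (M : ℕ) : Function.Injective (evalOmega M) := by
  rw [← LinearMap.ker_eq_bot, LinearMap.ker_eq_bot']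
  intro f hf
  have hvanish : ∀ z w : ℂ, (f * (1 - C X * Y)).evalEval z w = 0 := fun z w => by
    by_cases hzw : z * w = 1
    · simp [evalEval_mul, evalEval_sub, evalEval_X, evalEval_C, hzw]
    have h : f.evalEval z w / (1 - z * w) ^ M = 0 := by
      rw [← evalOmega_apply M f ⟨(z, w), hzw⟩, hf]; rfl
    have hD : (1 - z * w) ^ M ≠ 0 := pow_ne_zero _ (sub_ne_zero.mpr (Ne.symm hzw))
    simp [evalEval_mul, (div_eq_zero_iff.mp h).resolve_right hD]
  have hunit : (1 - C X * Y : ℂ[X][Y]) ≠ 0 := fun h => by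
    simpa using congrArg (evalEval 0 0) h
  exact (mul_eq_zero.mp (eq_zero_of_forall_evalEval_eq_zero hvanish)).resolve_right hunit

noncomputable def modeProfile (m : ℕ) (n : ℤ) : ℂ[X] :=
  C ((-1) ^ n) * ∑ k ∈ Finset.range (m - n.natAbs + 1),
    monomial k ((m.choose (k + n.natAbs) : ℂ) * m.choose k)

noncomputable def modePoly (M m : ℕ) (n : ℤ) : ℂ[X][Y] :=
  diagMul (-n).toNat n.toNat (modeProfile m n * (1 - X) ^ (M - m))

theorem natDegree_modeProfile_le (m : ℕ) (n : ℤ) :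
    (modeProfile m n).natDegree ≤ m - n.natAbs := by
  refine natDegree_C_mul_le _ _ |>.trans <| natDegree_sum_le_of_forall_le _ _ fun k hk => ?_
  exact (natDegree_monomial_le _).trans (by simp at hk; omega)

theorem eval_one_modeProfile_ne_zero {m : ℕ} {n : ℤ} (hn : n.natAbs ≤ m) :
    (modeProfile m n).eval 1 ≠ 0 := by
  have hsum : 0 < ∑ k ∈ Finset.range (m - n.natAbs + 1), m.choose (k + n.natAbs) * m.choose k :=
    Finset.sum_pos' (fun _ _ => Nat.zero_le _) ⟨0, by simp, by simp [Nat.choose_pos hn]⟩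
  have : (modeProfile m n).eval 1 =
      (-1) ^ n * ((∑ k ∈ Finset.range (m - n.natAbs + 1),
        m.choose (k + n.natAbs) * m.choose k : ℕ) : ℂ) := by
    simp [modeProfile, eval_finsetSum]
  rw [this]
  exact mul_ne_zero (zpow_ne_zero _ (by norm_num)) (Nat.cast_ne_zero.mpr hsum.ne')

theorem rootMultiplicity_one_modeProfile_mul {m : ℕ} {n : ℤ} (hn : n.natAbs ≤ m) (k : ℕ) :
    (modeProfile m n * (1 - X) ^ k).rootMultiplicity 1 = k := by
  have hsign : modeProfile m n * (1 - X) ^ k = C ((-1) ^ k) * modeProfile m n * (X - C 1) ^ k := by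
    rw [mul_comm (C _), mul_assoc, map_pow, ← mul_pow, map_neg, C_1]; ring
  have hroot : ¬ (C ((-1) ^ k) * modeProfile m n).IsRoot 1 := by
    simp [eval_one_modeProfile_ne_zero hn]
  rw [hsign, rootMultiplicity_mul_X_sub_C_pow (fun h => hroot (by rw [h, IsRoot.def, eval_zero])),
    rootMultiplicity_eq_zero hroot, zero_add]

theorem modeProfile_mul_ne_zero {m : ℕ} {n : ℤ} (hn : n.natAbs ≤ m) (k : ℕ) :
    modeProfile m n * (1 - X) ^ k ≠ 0 :=
  mul_ne_zero (fun h => eval_one_modeProfile_ne_zero hn (by simp [h]))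
    (pow_ne_zero _ fun h => by simpa using congrArg (eval 0) h)

theorem sum_eq_eval_modeProfile (m : ℕ) (n : ℤ) (z w : ℂ) :
    (-1) ^ n * ∑ k ∈ Finset.range (m - n.natAbs + 1),
        (m.choose (k + n.natAbs) : ℂ) * m.choose k * z ^ (k + (max (-n) 0).toNat) *
          w ^ (k + (max n 0).toNat) =
      z ^ (-n).toNat * w ^ n.toNat * (modeProfile m n).eval (z * w) := by
  have hmax : (max (-n) 0).toNat = (-n).toNat ∧ (max n 0).toNat = n.toNat := by omega
  simp only [modeProfile, eval_mul, eval_C, eval_finsetSum, eval_monomial, hmax, Finset.mul_sum]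
  refine Finset.sum_congr rfl fun k _ => ?_
  ring

theorem evalOmega_modePoly {M m : ℕ} (hm : m ≤ M) (n : ℤ) :
    evalOmega M (modePoly M m n) = PFM m n := by
  funext p
  have hD : 1 - p.1.1 * p.1.2 ≠ 0 := sub_ne_zero.mpr (Ne.symm p.2)
  rw [evalOmega_apply, PFM, sum_eq_eval_modeProfile, ← pow_sub_mul_pow _ hm]
  simp only [modePoly, evalEval_diagMul, eval_mul, eval_pow, eval_sub, eval_one, eval_X]
  field_simp

theorem modePoly_mem_span {M m : ℕ} {n : ℤ} (hm : m ≤ M) (hn : n.natAbs ≤ m) :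
    modePoly M m n ∈ Submodule.span ℂ (Set.range (monomialXY M)) := by
  have hX : (1 - X : ℂ[X]).natDegree ≤ 1 :=
    natDegree_sub_le_of_le (natDegree_one.trans_le zero_le_one) natDegree_X_le
  have hdeg := natDegree_mul_le (p := modeProfile m n) (q := (1 - X) ^ (M - m)) |>.trans
    (add_le_add (natDegree_modeProfile_le m n) (natDegree_pow_le_of_le (M - m) hX))
  exact diagMul_mem_span _ (by omega) (by omega)

theorem span_mono_eq_map (M : ℕ) :
    Submodule.span ℂ (Set.range (mono M)) =
      (Submodule.span ℂ (Set.range (monomialXY M))).map (evalOmega M) := by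
  rw [Submodule.map_span, ← Set.range_comp]
  congr 2
  funext jk p
  simp [evalOmega_apply, mono, monomialXY, evalEval]

noncomputable instance (m : ℕ) : Fintype {n : ℤ // n.natAbs ≤ m} :=
  Fintype.subtype (Finset.Icc (-(m : ℤ)) m) fun n => by simp only [Finset.mem_Icc]; omega

theorem card_natAbs_le (m : ℕ) : Fintype.card {n : ℤ // n.natAbs ≤ m} = 2 * m + 1 := by
  rw [Fintype.card_of_subtype (Finset.Icc (-(m : ℤ)) m)
    (fun n => by simp only [Finset.mem_Icc]; omega), Int.card_Icc]
  omega

abbrev ModeIndex (M : ℕ) := Σ m : Fin (M + 1), {n : ℤ // n.natAbs ≤ (m : ℕ)}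

theorem card_modeIndex (M : ℕ) : Fintype.card (ModeIndex M) = (M + 1) ^ 2 := by
  simp only [Fintype.card_sigma, card_natAbs_le, Fin.sum_univ_eq_sum_range (fun m => 2 * m + 1)]
  induction M with
  | zero => rfl
  | succ M ih => rw [Finset.sum_range_succ, ih]; ring

theorem linearIndependent_modePoly (M : ℕ) :
    LinearIndependent ℂ fun x : ModeIndex M => modePoly M x.1 x.2 := by
  let coeffs : ℂ[X] →ₗ[ℂ] ℕ → ℂ := LinearMap.pi fun i => lcoeff ℂ i
  -- the coefficients of `X ^ (i + (-n)₊) * Y ^ (i + n₊)` only see the modes with this `n`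
  refine linearIndependent_of_fiberwise (fun x : ModeIndex M => x.2.1)
    (fun x => coeffs (modeProfile x.1 x.2 * (1 - X) ^ (M - x.1)))
    (fun n => LinearMap.pi fun i =>
      lcoeff ℂ (i + (-n).toNat) ∘ₗ (lcoeff ℂ[X] (i + n.toNat)).restrictScalars ℂ) ?_ ?_
  · intro x n
    funext i
    split_ifs with h
    · subst h; simp [coeffs, modePoly, coeff_coeff_diagMul_add]
    · exact coeff_coeff_diagMul_of_ne _ (by push_cast; omega)
  · intro n₀
    have hcoeffs : Function.Injective coeffs := fun p q h => Polynomial.ext (congrFun h)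
    refine (linearIndependent_of_injective_rootMultiplicity 1
      (fun x => modeProfile_mul_ne_zero x.1.2.2 _) ?_).map' coeffs
        (LinearMap.ker_eq_bot.mpr hcoeffs)
    rintro ⟨⟨m, n, hn⟩, rfl⟩ ⟨⟨m', n', hn'⟩, hnn'⟩ h
    simp only [rootMultiplicity_one_modeProfile_mul hn,
      rootMultiplicity_one_modeProfile_mul hn'] at h
    obtain rfl : m = m' := Fin.ext (by omega)
    obtain rfl : n' = n := hnn'
    rfl

theorem linearIndependent_PFM (M : ℕ) :
    LinearIndependent ℂ fun x : ModeIndex M => PFM x.1 x.2.1 := by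
  have hcomp : (evalOmega M ∘ fun x : ModeIndex M => modePoly M x.1 x.2) =
      fun x => PFM x.1 x.2.1 :=
    funext fun x => evalOmega_modePoly x.1.is_le x.2.1
  exact hcomp ▸ (linearIndependent_modePoly M).map' (evalOmega M)
    (LinearMap.ker_eq_bot.mpr (evalOmega_injective M))

theorem span_PFM_eq_span_mono (M : ℕ) :
    Submodule.span ℂ (Set.range fun x : ModeIndex M => PFM x.1 x.2.1) =
      Submodule.span ℂ (Set.range (mono M)) := by
  have : FiniteDimensional ℂ (Submodule.span ℂ (Set.range (mono M))) :=
    FiniteDimensional.span_of_finite ℂ (Set.finite_range _)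
  refine Submodule.eq_of_le_of_finrank_le ?_ ?_
  · rw [span_mono_eq_map, Submodule.span_le]
    rintro _ ⟨x, rfl⟩
    change PFM x.1 x.2.1 ∈ Submodule.map _ _
    rw [← evalOmega_modePoly x.1.is_le]
    exact Submodule.mem_map_of_mem (modePoly_mem_span x.1.is_le x.2.2)
  · rw [finrank_span_eq_card (linearIndependent_PFM M), card_modeIndex]
    exact (finrank_range_le_card _).trans (by simp [sq])

theorem range_PFM_eq_range_modeIndex (M : ℕ) :
    Set.range (fun q : {q : ℕ × ℤ // q.1 ≤ M ∧ q.2.natAbs ≤ q.1} => PFM q.1.1 q.1.2) =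
      Set.range fun x : ModeIndex M => PFM x.1 x.2.1 := by
  ext f
  constructor
  · rintro ⟨⟨⟨m, n⟩, hm, hn⟩, rfl⟩
    exact ⟨⟨⟨m, by omega⟩, ⟨n, hn⟩⟩, rfl⟩
  · rintro ⟨⟨m, n, hn⟩, rfl⟩
    exact ⟨⟨(m, n), by omega, hn⟩, rfl⟩

end PoissonFourierMode

open PoissonFourierMode in
/-- `V = span{z^j w^k (1-zw)^{-M}}` has dimension `(M+1)²`, equals the span of
the Poisson Fourier modes `P_n^{-m}` with `m ≤ M`, `|n| ≤ m`, and the latter is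
a direct sum over `m = 0, …, M` of the `(2m+1)`-dimensional `Δ_{zw}`-eigenspace
blocks with eigenvalue `4m(m+1)`. -/
theorem stmt19 (M : ℕ) :
    Module.finrank ℂ ↥(Submodule.span ℂ (Set.range (mono M))) = (M + 1) ^ 2
    ∧ Submodule.span ℂ (Set.range (mono M))
        = Submodule.span ℂ
            (Set.range (fun q : {q : ℕ × ℤ // q.1 ≤ M ∧ q.2.natAbs ≤ q.1} =>
              PFM q.1.1 q.1.2))
    ∧ iSupIndep (fun m : Fin (M + 1) =>
        Submodule.span ℂ
          (Set.range (fun n : {n : ℤ // n.natAbs ≤ (m : ℕ)} => PFM (m : ℕ) n.1)))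
    ∧ ∀ m : Fin (M + 1),
        Module.finrank ℂ
          ↥(Submodule.span ℂ
            (Set.range (fun n : {n : ℤ // n.natAbs ≤ (m : ℕ)} => PFM (m : ℕ) n.1)))
          = 2 * (m : ℕ) + 1 := by
  have hind := linearIndependent_PFM M
  refine ⟨?_, ?_, ?_, fun m => ?_⟩
  · rw [← span_PFM_eq_span_mono, finrank_span_eq_card hind, card_modeIndex]
  · rw [range_PFM_eq_range_modeIndex, span_PFM_eq_span_mono]
  · have hblock (m : Fin (M + 1)) :
        Set.range (fun n : {n : ℤ // n.natAbs ≤ (m : ℕ)} => PFM (m : ℕ) n.1) =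
          (fun x : ModeIndex M => PFM x.1 x.2.1) '' (Sigma.fst ⁻¹' {m}) := by
      rw [← Set.range_sigmaMk, ← Set.range_comp]
      rfl
    simp only [hblock]
    exact hind.iSupIndep_span_image_preimage Sigma.fst
  · exact (finrank_span_eq_card (hind.comp (Sigma.mk m) sigma_mk_injective)).trans
      (card_natAbs_le m)
end
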